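/- arXiv:math/0111280 — 3 statements merged into one kernel-verified Lean document; each statement's English description precedes it below -/
import Mathlib

section
/- In the symmetric group S_n with Coxeter element c = (1 2 ... n), a permutation σ satisfies ℓ(σ) + ℓ(σ⁻¹c) = ℓ(c) = n - 1 (where ℓ is reflection length) if and only if the cycle structure of σ corresponds to a non-crossing partition of {1,...,n}. -/
/-- Reflection length in the symmetric group: minimal number of transpositions. -/
noncomputable def reflectionLength {n : ℕ} (σ : Equiv.Perm (Fin n)) : ℕ :=
  sInf {k | ∃ l : List (Equiv.Perm (Fin n)),
    (∀ τ ∈ l, τ.IsSwap) ∧ l.length = k ∧ l.prod = σ}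

/-- The partition of `{1,…,n}` into the orbits (cycle supports) of `σ` is non-crossing. -/
def OrbitsNonCrossing {n : ℕ} (σ : Equiv.Perm (Fin n)) : Prop :=
  ∀ a b c d : Fin n, a < b → b < c → c < d →
    σ.SameCycle a c → σ.SameCycle b d → σ.SameCycle a b

/-- Every cycle of `σ` is increasing in the cyclic order of `{1,…,n}`: each non-fixed point
`a` is sent to the least element of its orbit larger than `a`, or, when `a` is the largest
element of its orbit, to the least element of its orbit. -/
def CyclesIncreasing {n : ℕ} (σ : Equiv.Perm (Fin n)) : Prop :=
  ∀ a : Fin n, σ a ≠ a →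
    ((a < σ a ∧ ∀ b, σ.SameCycle a b → a < b → σ a ≤ b) ∨
     (σ a < a ∧ ∀ b, σ.SameCycle a b → σ a ≤ b ∧ b ≤ a))

/-!
Count the cycles of a permutation, fixed points included, by their minima. Multiplying by a
transposition `swap x y` merges the cycles of `x` and `y` or splits their common cycle, and the
count changes by exactly one (a split cannot keep the count, since it changes the sign). So the
reflection length is `n` minus the number of cycles, and `σ` divides `c = finRotate n` iff
`#cyc σ + #cyc (σ⁻¹ * c) = n + 1`, the largest value subadditivity allows.

If `σ` is non-crossing with increasing cycles and `x < y` lie in one cycle, then the cycles of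
`σ * swap x y` are those of `σ` cut along the chord: two points stay together iff they did and lie
on the same side of `(x, y]`. Hence the product is again non-crossing with increasing cycles.
For a non-crossing `σ ≠ 1`, split off the end of a shortest arc `x < σ x`. The points in between
are fixed, so `x` and `σ x` share a cycle of the new complement, and `σ⁻¹ * c` is its split along
`x, σ x`: both counts change by one and induction applies. For a divisor `σ ≠ c`, some
`x, y` share a cycle of `σ⁻¹ * c` but not of `σ`; merging them gives a divisor with fewer cycles,
non-crossing by induction, and `σ` is its split along `x, y`.
-/

open Equiv Finset

namespace Equiv.Perm

variable {α : Type*}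

section SameCycle

variable {σ : Perm α}

theorem SameCycle.rel_of_forall_rel_apply [Finite α] {r : α → α → Prop} (refl : ∀ z, r z z)
    (trans : ∀ {u v w}, r u v → r v w → r u w) (step : ∀ z, r z (σ z)) {a b : α}
    (h : σ.SameCycle a b) : r a b := by
  obtain ⟨k, rfl⟩ := h.exists_nat_pow_eq
  clear h
  induction k with
  | zero => exact refl a
  | succ k ih => rw [pow_succ', mul_apply]; exact trans ih (step _)

variable [DecidableEq α] [Finite α] {x y a b : α}

theorem sameCycle_of_sameCycle_mul_swap (hxy : σ.SameCycle x y)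
    (h : (σ * swap x y).SameCycle a b) : σ.SameCycle a b := by
  refine h.rel_of_forall_rel_apply (SameCycle.refl σ) SameCycle.trans fun z => ?_
  rw [mul_apply, sameCycle_apply_right, swap_apply_def]
  split_ifs with hzx hzy
  · rwa [hzx]
  · rw [hzy]; exact hxy.symm
  · exact .rfl

theorem sameCycle_or_of_sameCycle_mul_swap (h : (σ * swap x y).SameCycle a b) :
    σ.SameCycle a b ∨
      ((σ.SameCycle a x ∨ σ.SameCycle a y) ∧ (σ.SameCycle b x ∨ σ.SameCycle b y)) := by
  refine h.rel_of_forall_rel_apply (r := fun u v => σ.SameCycle u v ∨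
    ((σ.SameCycle u x ∨ σ.SameCycle u y) ∧ (σ.SameCycle v x ∨ σ.SameCycle v y)))
    (fun _ => Or.inl .rfl) ?_ fun z => ?_
  · rintro u v w (huv | ⟨hu, hv⟩) (hvw | ⟨hv', hw⟩)
    · exact Or.inl (huv.trans hvw)
    · exact Or.inr ⟨hv'.imp huv.trans huv.trans, hw⟩
    · exact Or.inr ⟨hu, hv.imp hvw.symm.trans hvw.symm.trans⟩
    · exact Or.inr ⟨hu, hw⟩
  · rw [mul_apply, swap_apply_def]
    split_ifs with hzx hzy
    · subst hzx; exact Or.inr ⟨Or.inl .rfl, Or.inr (sameCycle_apply_left.2 .rfl)⟩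
    · subst hzy; exact Or.inr ⟨Or.inr .rfl, Or.inl (sameCycle_apply_left.2 .rfl)⟩
    · exact Or.inl (sameCycle_apply_right.2 .rfl)

theorem sameCycle_mul_swap_of_not_sameCycle (h : ¬σ.SameCycle x y) :
    (σ * swap x y).SameCycle x y := by
  have hy : ∀ k : ℕ, (σ ^ k) x ≠ y := fun k hk => h (hk ▸ sameCycle_pow_right.2 .rfl)
  -- `σ * swap x y` sends `y` to `σ x`, then follows `σ` along the cycle of `x` until `x` returns
  have key : ∀ k : ℕ, (σ * swap x y).SameCycle y x ∨
      (σ * swap x y).SameCycle y ((σ ^ (k + 1)) x) := by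
    intro k
    induction k with
    | zero =>
      have : (σ * swap x y) y = σ x := by rw [mul_apply, swap_apply_right]
      rw [zero_add, pow_one, ← this]
      exact Or.inr (sameCycle_apply_right.2 .rfl)
    | succ k ih =>
      refine ih.elim Or.inl fun hk => ?_
      by_cases hx : (σ ^ (k + 1)) x = x
      · rw [hx] at hk
        exact Or.inl hk
      · have : (σ * swap x y) ((σ ^ (k + 1)) x) = (σ ^ (k + 1 + 1)) x := by
          rw [mul_apply, swap_apply_of_ne_of_ne hx (hy _), pow_succ' σ (k + 1), mul_apply]
        exact Or.inr (this ▸ hk.trans (sameCycle_apply_right.2 .rfl))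
  obtain ⟨k, hk⟩ := (sameCycle_apply_left.2 .rfl : σ.SameCycle (σ x) x).exists_nat_pow_eq
  rw [← mul_apply, ← pow_succ] at hk
  exact (key k).elim SameCycle.symm fun h' => (hk ▸ h').symm

theorem SameCycle.mul_swap_or (ha : σ.SameCycle a x) :
    (σ * swap x y).SameCycle a x ∨ (σ * swap x y).SameCycle a y :=
  (sameCycle_or_of_sameCycle_mul_swap (by rwa [mul_swap_mul_self])).elim Or.inl And.left

theorem SameCycle.mul_swap_of_not_sameCycle (hab : σ.SameCycle a b) (hxy : σ.SameCycle x y)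
    (hax : ¬σ.SameCycle a x) : (σ * swap x y).SameCycle a b := by
  have hab' : (σ * swap x y * swap x y).SameCycle a b := by rwa [mul_swap_mul_self]
  rcases sameCycle_or_of_sameCycle_mul_swap hab' with h | ⟨ha | ha, -⟩
  · exact h
  · exact absurd (sameCycle_of_sameCycle_mul_swap hxy ha) hax
  · exact absurd ((sameCycle_of_sameCycle_mul_swap hxy ha).trans hxy.symm) hax

end SameCycle

section CycleCount

variable [Fintype α] [LinearOrder α] {σ τ : Perm α} {x y a b : α}

def cycleMins (σ : Perm α) : Finset α := {a | ∀ b, σ.SameCycle a b → a ≤ b}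

/-- The number of cycles of `σ`, fixed points included. -/
def numCycles (σ : Perm α) : ℕ := #σ.cycleMins

def cycleMin (σ : Perm α) (a : α) : α :=
  ({b | σ.SameCycle a b} : Finset α).min' ⟨a, by simp [SameCycle.refl]⟩

@[simp]
theorem mem_cycleMins : a ∈ σ.cycleMins ↔ ∀ b, σ.SameCycle a b → a ≤ b := by
  simp [cycleMins]

theorem sameCycle_cycleMin (σ : Perm α) (a : α) : σ.SameCycle a (σ.cycleMin a) :=
  (mem_filter.1 (min'_mem _ _)).2

theorem cycleMin_le (h : σ.SameCycle a b) : σ.cycleMin a ≤ b :=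
  min'_le _ _ (by simpa using h)

theorem SameCycle.cycleMin_eq (h : σ.SameCycle a b) : σ.cycleMin a = σ.cycleMin b :=
  le_antisymm (cycleMin_le (h.trans (sameCycle_cycleMin σ b)))
    (cycleMin_le (h.symm.trans (sameCycle_cycleMin σ a)))

theorem cycleMin_mem_cycleMins (σ : Perm α) (a : α) : σ.cycleMin a ∈ σ.cycleMins :=
  mem_cycleMins.2 fun _ hb => cycleMin_le ((sameCycle_cycleMin σ a).trans hb)

theorem eq_of_mem_cycleMins (ha : a ∈ σ.cycleMins) (hb : b ∈ σ.cycleMins)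
    (h : σ.SameCycle a b) : a = b :=
  le_antisymm (mem_cycleMins.1 ha b h) (mem_cycleMins.1 hb a h.symm)

theorem cycleMin_eq_self (ha : a ∈ σ.cycleMins) : σ.cycleMin a = a :=
  eq_of_mem_cycleMins (cycleMin_mem_cycleMins σ a) ha (sameCycle_cycleMin σ a).symm

theorem cycleMin_lt_apply (h : σ a ≠ a) : σ.cycleMin a < σ (σ.cycleMin a) := by
  have hm := sameCycle_cycleMin σ a
  refine lt_of_le_of_ne ?_ fun he => h (hm.apply_eq_self_iff.2 he.symm)
  exact mem_cycleMins.1 (cycleMin_mem_cycleMins σ a) _ (sameCycle_apply_right.2 .rfl)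

theorem cycleMins_subset (h : ∀ a b, τ.SameCycle a b → σ.SameCycle a b) :
    σ.cycleMins ⊆ τ.cycleMins :=
  fun a ha => mem_cycleMins.2 fun b hb => mem_cycleMins.1 ha b (h a b hb)

theorem numCycles_le_card (σ : Perm α) : σ.numCycles ≤ Fintype.card α := card_le_univ _

theorem numCycles_pos [Nonempty α] (σ : Perm α) : 0 < σ.numCycles :=
  card_pos.2 ⟨_, cycleMin_mem_cycleMins σ (Classical.arbitrary α)⟩

@[simp]
theorem numCycles_inv (σ : Perm α) : σ⁻¹.numCycles = σ.numCycles := by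
  simp [numCycles, cycleMins, sameCycle_inv]

theorem numCycles_eq_card_iff : σ.numCycles = Fintype.card α ↔ σ = 1 := by
  refine ⟨fun h => ?_, fun h => by simp [h, numCycles, cycleMins]⟩
  have hall : ∀ a, a ∈ σ.cycleMins := by simp [σ.cycleMins.eq_univ_of_card h]
  ext a
  exact eq_of_mem_cycleMins (hall _) (hall _) (sameCycle_apply_left.2 .rfl)

@[simp]
theorem numCycles_one : (1 : Perm α).numCycles = Fintype.card α := numCycles_eq_card_iff.2 rfl

theorem numCycles_eq_one_of_forall_sameCycle [Nonempty α] (h : ∀ a b, σ.SameCycle a b) :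
    σ.numCycles = 1 :=
  le_antisymm (card_le_one.2 fun _ ha _ hb => eq_of_mem_cycleMins ha hb (h _ _)) (numCycles_pos σ)

theorem numCycles_le_numCycles_mul_swap_add_one (σ : Perm α) (x y : α) :
    σ.numCycles ≤ (σ * swap x y).numCycles + 1 := by
  set u := σ.cycleMin x
  set v := σ.cycleMin y
  have hD : ∀ z, σ.SameCycle z x ∨ σ.SameCycle z y → σ.cycleMin z = u ∨ σ.cycleMin z = v :=
    fun z => Or.imp SameCycle.cycleMin_eq SameCycle.cycleMin_eq
  -- a cycle minimum lost in the product lies in the merged cycle of `x` and `y`, above its minimum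
  have hlost : σ.cycleMins \ (σ * swap x y).cycleMins ⊆ ({u, v} : Finset α).erase (min u v) := by
    intro a ha
    obtain ⟨haσ, haτ⟩ := mem_sdiff.1 ha
    obtain ⟨b, hab, hba⟩ : ∃ b, (σ * swap x y).SameCycle a b ∧ b < a := by simpa using haτ
    rcases sameCycle_or_of_sameCycle_mul_swap hab with h | ⟨ha', hb'⟩
    · exact absurd (mem_cycleMins.1 haσ b h) (not_le.2 hba)
    have hbmin := cycleMin_le (SameCycle.refl σ b)
    have hlt : min u v < a := by
      rcases hD b hb' with h | h <;> rw [h] at hbmin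
      · exact (min_le_left u v).trans_lt (hbmin.trans_lt hba)
      · exact (min_le_right u v).trans_lt (hbmin.trans_lt hba)
    refine mem_erase.2 ⟨hlt.ne', ?_⟩
    rcases cycleMin_eq_self haσ ▸ hD a ha' with h | h <;> simp [h]
  have hcard : #(({u, v} : Finset α).erase (min u v)) ≤ 1 := by
    have : min u v ∈ ({u, v} : Finset α) := by rcases min_choice u v with h | h <;> simp [h]
    rw [card_erase_of_mem this]
    have := card_le_two (a := u) (b := v)
    omega
  calc σ.numCycles ≤ #(σ.cycleMins \ (σ * swap x y).cycleMins) + (σ * swap x y).numCycles :=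
        card_le_card_sdiff_add_card
    _ ≤ (σ * swap x y).numCycles + 1 := by
        have := (card_le_card hlost).trans hcard
        omega

theorem numCycles_le_numCycles_swap_mul_add_one (σ : Perm α) (x y : α) :
    σ.numCycles ≤ (swap x y * σ).numCycles + 1 := by
  have := numCycles_le_numCycles_mul_swap_add_one σ⁻¹ x y
  rwa [numCycles_inv, ← swap_inv, ← mul_inv_rev, numCycles_inv] at this

theorem numCycles_mul_swap_of_not_mem_cycleMins (ha : a ∉ σ.cycleMins) :
    (σ * swap (σ⁻¹ a) a).numCycles = σ.numCycles + 1 := by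
  have hfix : (σ * swap (σ⁻¹ a) a) a = a := by simp
  have hrefine : σ.cycleMins ⊆ (σ * swap (σ⁻¹ a) a).cycleMins :=
    cycleMins_subset fun _ _ => sameCycle_of_sameCycle_mul_swap (sameCycle_symm_apply_left.2 .rfl)
  have ha' : a ∈ (σ * swap (σ⁻¹ a) a).cycleMins :=
    mem_cycleMins.2 fun _ hb => (hb.eq_of_left hfix).le
  have hge : σ.numCycles + 1 ≤ (σ * swap (σ⁻¹ a) a).numCycles := by
    rw [numCycles, ← card_insert_of_notMem ha]
    exact card_le_card (insert_subset ha' hrefine)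
  have hle := numCycles_le_numCycles_mul_swap_add_one (σ * swap (σ⁻¹ a) a) (σ⁻¹ a) a
  rw [mul_swap_mul_self] at hle
  omega

theorem exists_isSwap_prod_eq (σ : Perm α) : ∃ l : List (Perm α),
    (∀ τ ∈ l, τ.IsSwap) ∧ l.length = Fintype.card α - σ.numCycles ∧ l.prod = σ := by
  by_cases h : σ.numCycles = Fintype.card α
  · exact ⟨[], by simp, by simp [h], by simp [numCycles_eq_card_iff.1 h]⟩
  obtain ⟨a, ha⟩ : ∃ a, a ∉ σ.cycleMins := by
    by_contra! h'
    exact h (by rw [numCycles, eq_univ_of_forall h', card_univ])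
  have hne : σ⁻¹ a ≠ a := fun he =>
    ha (mem_cycleMins.2 fun _ hb => (hb.eq_of_left (inv_eq_iff_eq.1 he).symm).le)
  have hc := numCycles_mul_swap_of_not_mem_cycleMins ha
  have hcard := (σ * swap (σ⁻¹ a) a).numCycles_le_card
  obtain ⟨l, hl, hlen, hprod⟩ := exists_isSwap_prod_eq (σ * swap (σ⁻¹ a) a)
  refine ⟨l ++ [swap (σ⁻¹ a) a], ?_, ?_, ?_⟩
  · simpa [or_imp, forall_and] using ⟨hl, _, _, hne, rfl⟩
  · simp only [List.length_append, List.length_singleton, hlen]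
    omega
  · simp [hprod]
termination_by Fintype.card α - σ.numCycles
decreasing_by omega

theorem card_le_numCycles_prod_add_length :
    ∀ l : List (Perm α), (∀ τ ∈ l, τ.IsSwap) → Fintype.card α ≤ l.prod.numCycles + l.length
  | [], _ => by simp
  | t :: l, hl => by
    obtain ⟨x, y, -, rfl⟩ := hl t List.mem_cons_self
    have := card_le_numCycles_prod_add_length l fun τ hτ => hl τ (List.mem_cons_of_mem _ hτ)
    have := numCycles_le_numCycles_swap_mul_add_one l.prod x y
    simp only [List.prod_cons, List.length_cons]
    omega

theorem sign_eq_neg_one_pow (σ : Perm α) : sign σ = (-1) ^ (Fintype.card α - σ.numCycles) := by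
  obtain ⟨l, hl, hlen, hprod⟩ := exists_isSwap_prod_eq σ
  rw [← hlen, ← sign_prod_list_swap hl, hprod]

theorem numCycles_mul_swap_of_sameCycle (hxy : x ≠ y) (h : σ.SameCycle x y) :
    (σ * swap x y).numCycles = σ.numCycles + 1 := by
  have hge : σ.numCycles ≤ (σ * swap x y).numCycles :=
    card_le_card (cycleMins_subset fun _ _ => sameCycle_of_sameCycle_mul_swap h)
  have hle := numCycles_le_numCycles_mul_swap_add_one (σ * swap x y) x y
  rw [mul_swap_mul_self] at hle
  -- the counts cannot agree, since the signs differ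
  have hne : (σ * swap x y).numCycles ≠ σ.numCycles := fun heq => by
    have hsign : sign (σ * swap x y) = -sign σ := by rw [sign_mul, sign_swap hxy, mul_neg_one]
    rw [sign_eq_neg_one_pow, sign_eq_neg_one_pow σ, heq] at hsign
    exact units_ne_neg_self _ hsign
  omega

theorem numCycles_swap_mul_of_sameCycle (hxy : x ≠ y) (h : σ.SameCycle x y) :
    (swap x y * σ).numCycles = σ.numCycles + 1 := by
  rw [← numCycles_inv, mul_inv_rev, swap_inv, ← numCycles_inv σ]
  exact numCycles_mul_swap_of_sameCycle hxy (sameCycle_inv.2 h)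

theorem numCycles_mul_swap_add_one_of_not_sameCycle (h : ¬σ.SameCycle x y) :
    (σ * swap x y).numCycles + 1 = σ.numCycles := by
  have hxy : x ≠ y := fun he => h (he ▸ .rfl)
  have := numCycles_mul_swap_of_sameCycle hxy (sameCycle_mul_swap_of_not_sameCycle h)
  rw [mul_swap_mul_self] at this
  exact this.symm

theorem numCycles_add_numCycles_le (σ τ : Perm α) :
    σ.numCycles + τ.numCycles ≤ (σ * τ).numCycles + Fintype.card α := by
  obtain ⟨l₁, hl₁, hlen₁, rfl⟩ := exists_isSwap_prod_eq σ
  obtain ⟨l₂, hl₂, hlen₂, rfl⟩ := exists_isSwap_prod_eq τ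
  have := card_le_numCycles_prod_add_length (l₁ ++ l₂) fun τ hτ =>
    (List.mem_append.1 hτ).elim (hl₁ τ) (hl₂ τ)
  rw [List.prod_append, List.length_append] at this
  have := l₁.prod.numCycles_le_card
  have := l₂.prod.numCycles_le_card
  omega

end CycleCount

end Equiv.Perm

open Equiv.Perm

theorem reflectionLength_eq_sub_numCycles {n : ℕ} (σ : Perm (Fin n)) :
    reflectionLength σ = n - σ.numCycles := by
  obtain ⟨l, hl, hlen, hprod⟩ := exists_isSwap_prod_eq σ
  rw [Fintype.card_fin] at hlen
  refine le_antisymm (Nat.sInf_le ⟨l, hl, hlen, hprod⟩) (le_csInf ⟨_, l, hl, hlen, hprod⟩ ?_)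
  rintro k ⟨l', hl', rfl, rfl⟩
  have := card_le_numCycles_prod_add_length l' hl'
  rw [Fintype.card_fin] at this
  omega

section Coxeter

variable {n : ℕ}

theorem val_finRotate (z : Fin n) :
    (finRotate n z : ℕ) = if (z : ℕ) + 1 = n then 0 else (z : ℕ) + 1 := by
  obtain ⟨m, rfl⟩ := Nat.exists_eq_add_one_of_ne_zero z.pos.ne'
  rw [coe_finRotate z]
  simp [Fin.ext_iff]

theorem sameCycle_of_forall_val_apply_eq_succ {ρ : Perm (Fin n)} {x y : Fin n} (hxy : x ≤ y)
    (h : ∀ z, x ≤ z → z < y → (ρ z : ℕ) = z + 1) : ρ.SameCycle x y := by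
  have key : ∀ k : ℕ, (x : ℕ) + k ≤ y → ((ρ ^ k) x : ℕ) = x + k := by
    intro k
    induction k with
    | zero => simp
    | succ k ih =>
      intro hk
      have hv := ih (by omega)
      rw [pow_succ', mul_apply, h _ (by omega) (by omega), hv, add_assoc]
  have : (ρ ^ ((y : ℕ) - x)) x = y := Fin.ext (by rw [key _ (by omega)]; omega)
  exact this ▸ sameCycle_pow_right.2 .rfl

theorem sameCycle_finRotate (a b : Fin n) : (finRotate n).SameCycle a b := by
  have h0 : ∀ c : Fin n, (finRotate n).SameCycle ⟨0, a.pos⟩ c := fun c =>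
    sameCycle_of_forall_val_apply_eq_succ (Nat.zero_le _) fun z _ hz => by
      rw [val_finRotate, if_neg (by omega)]
  exact (h0 a).symm.trans (h0 b)

theorem numCycles_finRotate [NeZero n] : (finRotate n).numCycles = 1 :=
  numCycles_eq_one_of_forall_sameCycle sameCycle_finRotate

theorem numCycles_add_numCycles_inv_mul_finRotate_le [NeZero n] (σ : Perm (Fin n)) :
    σ.numCycles + (σ⁻¹ * finRotate n).numCycles ≤ n + 1 := by
  have := numCycles_add_numCycles_le σ (σ⁻¹ * finRotate n)
  rwa [mul_inv_cancel_left, numCycles_finRotate, Fintype.card_fin, add_comm 1] at this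

/-- `σ` lies below the Coxeter element `finRotate n` in the absolute order: by
`reflectionLength_eq_sub_numCycles` this says `ℓ σ + ℓ (σ⁻¹ * c) = ℓ c`. -/
def DividesCoxeter (σ : Perm (Fin n)) : Prop :=
  σ.numCycles + (σ⁻¹ * finRotate n).numCycles = n + 1

end Coxeter

/-- `c` lies in the half-open cyclic interval `(a, b]`, which is everything when `a = b`. -/
def MemCyclicIoc {α : Type*} [LinearOrder α] (a b c : α) : Prop :=
  (a < b → a < c ∧ c ≤ b) ∧ (b ≤ a → a < c ∨ c ≤ b)

section NonCrossing

variable {n : ℕ} {σ : Perm (Fin n)} {x y : Fin n}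

theorem cyclesIncreasing_iff_memCyclicIoc :
    CyclesIncreasing σ ↔ ∀ a b, σ.SameCycle a b → MemCyclicIoc a b (σ a) := by
  constructor
  · intro h a b hab
    by_cases hfix : σ a = a
    · rw [hfix, ← hab.eq_of_left hfix]
      exact ⟨fun h => absurd h (lt_irrefl a), fun _ => Or.inr le_rfl⟩
    rcases h a hfix with ⟨hlt, hnext⟩ | ⟨hlt, hbound⟩
    · exact ⟨fun hab' => ⟨hlt, hnext b hab hab'⟩, fun _ => Or.inl hlt⟩
    · obtain ⟨h₁, h₂⟩ := hbound b hab
      exact ⟨fun hab' => absurd hab' h₂.not_gt, fun _ => Or.inr h₁⟩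
  · intro h a hfix
    rcases lt_or_gt_of_ne (Ne.symm hfix) with hlt | hlt
    · exact Or.inl ⟨hlt, fun b hab hab' => ((h a b hab).1 hab').2⟩
    · refine Or.inr ⟨hlt, fun b hab => ?_⟩
      have hba : b ≤ a := not_lt.1 fun hab' => hlt.not_gt ((h a b hab).1 hab').1
      exact ⟨((h a b hab).2 hba).resolve_left hlt.not_gt, hba⟩

theorem CyclesIncreasing.memCyclicIoc (h : CyclesIncreasing σ) {a b : Fin n}
    (hab : σ.SameCycle a b) : MemCyclicIoc a b (σ a) :=
  cyclesIncreasing_iff_memCyclicIoc.1 h a b hab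

theorem cyclesIncreasing_finRotate : CyclesIncreasing (finRotate n) :=
  cyclesIncreasing_iff_memCyclicIoc.2 fun a b _ => by
    have := val_finRotate a
    unfold MemCyclicIoc
    split_ifs at this <;> omega

theorem OrbitsNonCrossing.mem_Ioc_iff (hnc : OrbitsNonCrossing σ) (hxy : σ.SameCycle x y)
    {u v : Fin n} (hux : ¬σ.SameCycle u x) (huv : σ.SameCycle u v) :
    u ∈ Set.Ioc x y ↔ v ∈ Set.Ioc x y := by
  suffices key : ∀ {u v}, ¬σ.SameCycle u x → σ.SameCycle u v →
      u ∈ Set.Ioc x y → v ∈ Set.Ioc x y from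
    ⟨key hux huv, key (fun h => hux (huv.trans h)) huv.symm⟩
  intro u v hux huv ⟨hxu, huy⟩
  have huy : u < y := huy.lt_of_ne fun h => hux (h ▸ hxy.symm)
  by_contra hv
  rcases not_and_or.1 hv with hv | hv
  · have hvx : v < x := (not_lt.1 hv).lt_of_ne fun h => hux (h ▸ huv)
    exact hux (huv.trans (hnc v x u y hvx hxu huy huv.symm hxy))
  · exact hux (hnc x u y v hxu huy (not_le.1 hv) hxy huv).symm

theorem mem_Ioc_mul_swap_apply_iff (hnc : OrbitsNonCrossing σ) (hinc : CyclesIncreasing σ)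
    (hxy : x < y) (hB : σ.SameCycle x y) (z : Fin n) :
    (σ * swap x y) z ∈ Set.Ioc x y ↔ z ∈ Set.Ioc x y := by
  rw [mul_apply, swap_apply_def]
  split_ifs with hzx hzy
  · subst hzx
    have := hinc.memCyclicIoc hB.symm
    simp only [MemCyclicIoc, Set.mem_Ioc] at this ⊢
    omega
  · subst hzy
    have := hinc.memCyclicIoc hB
    simp only [MemCyclicIoc, Set.mem_Ioc] at this ⊢
    omega
  · by_cases hzB : σ.SameCycle z x
    · have h₁ := hinc.memCyclicIoc hzB
      have h₂ := hinc.memCyclicIoc (hzB.trans hB)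
      simp only [MemCyclicIoc, Set.mem_Ioc] at h₁ h₂ ⊢
      omega
    · exact (hnc.mem_Ioc_iff hB hzB (sameCycle_apply_right.2 .rfl)).symm

theorem mem_Ioc_iff_of_sameCycle_mul_swap (hnc : OrbitsNonCrossing σ)
    (hinc : CyclesIncreasing σ) (hxy : x < y) (hB : σ.SameCycle x y) {a b : Fin n}
    (h : (σ * swap x y).SameCycle a b) : a ∈ Set.Ioc x y ↔ b ∈ Set.Ioc x y :=
  h.rel_of_forall_rel_apply (r := fun u v => u ∈ Set.Ioc x y ↔ v ∈ Set.Ioc x y)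
    (fun _ => Iff.rfl) Iff.trans fun z =>
    (mem_Ioc_mul_swap_apply_iff hnc hinc hxy hB z).symm

theorem sameCycle_mul_swap_iff_of_orbitsNonCrossing (hnc : OrbitsNonCrossing σ)
    (hinc : CyclesIncreasing σ) (hxy : x < y) (hB : σ.SameCycle x y) {a b : Fin n} :
    (σ * swap x y).SameCycle a b ↔ σ.SameCycle a b ∧ (a ∈ Set.Ioc x y ↔ b ∈ Set.Ioc x y) := by
  have side : ∀ {a b}, (σ * swap x y).SameCycle a b → (a ∈ Set.Ioc x y ↔ b ∈ Set.Ioc x y) :=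
    mem_Ioc_iff_of_sameCycle_mul_swap hnc hinc hxy hB
  refine ⟨fun h => ⟨sameCycle_of_sameCycle_mul_swap hB h, side h⟩, fun ⟨hab, hside⟩ => ?_⟩
  by_cases hax : σ.SameCycle a x
  · -- `a` and `b` each stay with `x` or with `y`, which lie on different sides of the chord
    have hx : x ∉ Set.Ioc x y := fun h => lt_irrefl x h.1
    have hy : y ∈ Set.Ioc x y := ⟨hxy, le_rfl⟩
    rcases hax.mul_swap_or (y := y) with ha | ha <;>
      rcases (hab.symm.trans hax).mul_swap_or (y := y) with hb | hb
    · exact ha.trans hb.symm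
    · exact absurd (hside.2 ((side hb).2 hy)) fun h => hx ((side ha).1 h)
    · exact absurd (hside.1 ((side ha).2 hy)) fun h => hx ((side hb).1 h)
    · exact ha.trans hb.symm
  · exact hab.mul_swap_of_not_sameCycle hB hax

theorem OrbitsNonCrossing.mul_swap (hnc : OrbitsNonCrossing σ) (hinc : CyclesIncreasing σ)
    (hxy : x < y) (hB : σ.SameCycle x y) : OrbitsNonCrossing (σ * swap x y) := by
  intro a b c d hab hbc hcd hac hbd
  rw [sameCycle_mul_swap_iff_of_orbitsNonCrossing hnc hinc hxy hB] at hac hbd ⊢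
  refine ⟨hnc a b c d hab hbc hcd hac.1 hbd.1, ?_⟩
  -- an interval cannot separate `a` from `b` while `a, c` and `b, d` lie on equal sides of it
  have hac := hac.2
  have hbd := hbd.2
  simp only [Set.mem_Ioc] at hac hbd ⊢
  omega

theorem CyclesIncreasing.mul_swap (hinc : CyclesIncreasing σ) (hnc : OrbitsNonCrossing σ)
    (hxy : x < y) (hB : σ.SameCycle x y) : CyclesIncreasing (σ * swap x y) := by
  refine cyclesIncreasing_iff_memCyclicIoc.2 fun a b hτ => ?_
  obtain ⟨hab, hside⟩ := (sameCycle_mul_swap_iff_of_orbitsNonCrossing hnc hinc hxy hB).1 hτ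
  rw [mul_apply, swap_apply_def]
  split_ifs with hax hay
  · subst hax
    have := hinc.memCyclicIoc (hB.symm.trans hab)
    simp only [MemCyclicIoc, Set.mem_Ioc] at this hside ⊢
    omega
  · subst hay
    have := hinc.memCyclicIoc (hB.trans hab)
    simp only [MemCyclicIoc, Set.mem_Ioc] at this hside ⊢
    omega
  · exact hinc.memCyclicIoc hab

end NonCrossing

section Divisors

variable {n : ℕ}

theorem OrbitsNonCrossing.exists_lt_apply_forall_mem_Ioo_apply_eq {σ : Perm (Fin n)}
    (hnc : OrbitsNonCrossing σ) (hinc : CyclesIncreasing σ) (h1 : σ ≠ 1) :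
    ∃ x, x < σ x ∧ ∀ z ∈ Set.Ioo x (σ x), σ z = z := by
  obtain ⟨a, ha⟩ : ∃ a, σ a ≠ a := by
    by_contra! h
    exact h1 (Perm.ext h)
  have hne : ({x | x < σ x} : Finset (Fin n)).Nonempty := ⟨_, by simpa using cycleMin_lt_apply ha⟩
  obtain ⟨x, hx, hmin⟩ := exists_min_image _ (fun x => (σ x : ℕ) - x) hne
  simp only [mem_filter, mem_univ, true_and] at hx hmin
  refine ⟨x, hx, fun z hz => by_contra fun hzσ => ?_⟩
  -- the cycle of `z` is enclosed by the arc `x < σ x`, and its minimum starts a shorter arc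
  have hB : σ.SameCycle x (σ x) := sameCycle_apply_right.2 .rfl
  have hzx : ¬σ.SameCycle z x := fun h => by
    have := (hinc.memCyclicIoc h.symm).1 hz.1
    exact absurd hz.2 (not_lt.2 this.2)
  have hin : ∀ w, σ.SameCycle z w → w ∈ Set.Ioo x (σ x) := fun w hw => by
    have hw' := (hnc.mem_Ioc_iff hB hzx hw).1 ⟨hz.1, hz.2.le⟩
    refine ⟨hw'.1, hw'.2.lt_of_ne fun he => hzx ?_⟩
    rw [he] at hw
    exact hw.trans hB.symm
  have hm := sameCycle_cycleMin σ z
  have h₁ := hin _ hm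
  have h₂ := hin _ (hm.trans (sameCycle_apply_right.2 .rfl))
  have h₃ := hmin _ (cycleMin_lt_apply hzσ)
  simp only [Set.mem_Ioo] at h₁ h₂
  omega

theorem dividesCoxeter_of_orbitsNonCrossing [NeZero n] {σ : Perm (Fin n)}
    (hnc : OrbitsNonCrossing σ) (hinc : CyclesIncreasing σ) : DividesCoxeter σ := by
  by_cases h1 : σ = 1
  · simp [h1, DividesCoxeter, numCycles_finRotate]
  obtain ⟨x, hx, hfix⟩ := hnc.exists_lt_apply_forall_mem_Ioo_apply_eq hinc h1
  have hB : σ.SameCycle x (σ x) := sameCycle_apply_right.2 .rfl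
  have hτ := numCycles_mul_swap_of_sameCycle hx.ne hB
  have hτn : (σ * swap x (σ x)).numCycles ≤ n := by
    simpa using (σ * swap x (σ x)).numCycles_le_card
  have ih :=
    dividesCoxeter_of_orbitsNonCrossing (hnc.mul_swap hinc hx hB) (hinc.mul_swap hnc hx hB)
  have hτfix : ∀ z, x < z → z ≤ σ x → (σ * swap x (σ x)) z = z := fun z hxz hz => by
    rcases hz.lt_or_eq with hz | rfl
    · rw [mul_apply, swap_apply_of_ne_of_ne hxz.ne' hz.ne, hfix z ⟨hxz, hz⟩]
    · rw [mul_apply, swap_apply_right]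
  -- the split fixes `(x, σ x]` pointwise, so its complement climbs from `x` to `σ x`
  have hwalk : ((σ * swap x (σ x))⁻¹ * finRotate n).SameCycle x (σ x) :=
    sameCycle_of_forall_val_apply_eq_succ hx.le fun z hxz hz => by
      have hc : (finRotate n z : ℕ) = z + 1 := by rw [val_finRotate, if_neg (by omega)]
      rw [mul_apply, inv_eq_iff_eq.2 (hτfix _ (by omega) (by omega)).symm, hc]
  have hρ : σ⁻¹ * finRotate n = swap x (σ x) * ((σ * swap x (σ x))⁻¹ * finRotate n) := by
    rw [mul_inv_rev, swap_inv, mul_assoc, swap_mul_self_mul]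
  unfold DividesCoxeter at ih ⊢
  rw [hρ, numCycles_swap_mul_of_sameCycle hx.ne hwalk]
  omega
termination_by n - σ.numCycles
decreasing_by omega

theorem DividesCoxeter.orbitsNonCrossing_and_cyclesIncreasing [NeZero n] {σ : Perm (Fin n)}
    (h : DividesCoxeter σ) : OrbitsNonCrossing σ ∧ CyclesIncreasing σ := by
  by_cases hpair : ∃ x y, (σ⁻¹ * finRotate n).SameCycle x y ∧ ¬σ.SameCycle x y
  · obtain ⟨x, y, hρ, hσ⟩ := hpair
    have hxy : x ≠ y := fun he => hσ (he ▸ .rfl)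
    -- merging `x, y` in `σ` splits them in `σ⁻¹ * c`, so the product is again a divisor
    have hτ := numCycles_mul_swap_add_one_of_not_sameCycle hσ
    have hdiv : DividesCoxeter (σ * swap x y) := by
      have hρτ : (σ * swap x y)⁻¹ * finRotate n = swap x y * (σ⁻¹ * finRotate n) := by
        rw [mul_inv_rev, swap_inv, mul_assoc]
      unfold DividesCoxeter at h ⊢
      rw [hρτ, numCycles_swap_mul_of_sameCycle hxy hρ]
      omega
    obtain ⟨hnc, hinc⟩ := hdiv.orbitsNonCrossing_and_cyclesIncreasing
    obtain ⟨u, v, huv, hτuv, hσuv⟩ : ∃ u v, u < v ∧ (σ * swap x y).SameCycle u v ∧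
        σ * swap x y * swap u v = σ := by
      have hmerge := sameCycle_mul_swap_of_not_sameCycle hσ
      rcases hxy.lt_or_gt with hlt | hlt
      · exact ⟨x, y, hlt, hmerge, mul_swap_mul_self _ _ _⟩
      · exact ⟨y, x, hlt, hmerge.symm, by rw [swap_comm y x, mul_swap_mul_self]⟩
    rw [← hσuv]
    exact ⟨hnc.mul_swap hinc huv hτuv, hinc.mul_swap hnc huv hτuv⟩
  · push Not at hpair
    -- `c = σ * (σ⁻¹ * c)` moves every point inside its `σ`-cycle, so `σ` has a single cycle
    have htot : ∀ a b, σ.SameCycle a b := fun a b =>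
      (sameCycle_finRotate a b).rel_of_forall_rel_apply (SameCycle.refl σ) SameCycle.trans
        fun z => by
          rw [← mul_inv_cancel_left σ (finRotate n), mul_apply σ, sameCycle_apply_right]
          exact hpair z _ (sameCycle_apply_right.2 .rfl)
    have hρ : σ⁻¹ * finRotate n = 1 := by
      have := numCycles_eq_one_of_forall_sameCycle htot
      unfold DividesCoxeter at h
      exact numCycles_eq_card_iff.1 (by rw [Fintype.card_fin]; omega)
    rw [inv_mul_eq_one.1 hρ]
    exact ⟨fun a b _ _ _ _ _ _ _ => sameCycle_finRotate a b, cyclesIncreasing_finRotate⟩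
termination_by σ.numCycles
decreasing_by omega

end Divisors

theorem divides_coxeter_iff_noncrossing {n : ℕ} (σ : Equiv.Perm (Fin n)) :
    reflectionLength σ + reflectionLength (σ⁻¹ * finRotate n) = n - 1 ↔
      OrbitsNonCrossing σ ∧ CyclesIncreasing σ := by
  rcases Nat.eq_zero_or_pos n with rfl | hn
  · simp [reflectionLength_eq_sub_numCycles, OrbitsNonCrossing, CyclesIncreasing]
  have : NeZero n := ⟨hn.ne'⟩
  have := σ.numCycles_pos
  have := (σ⁻¹ * finRotate n).numCycles_pos
  have := numCycles_add_numCycles_inv_mul_finRotate_le σ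
  rw [reflectionLength_eq_sub_numCycles, reflectionLength_eq_sub_numCycles]
  calc _ ↔ DividesCoxeter σ := by unfold DividesCoxeter; omega
    _ ↔ _ := ⟨DividesCoxeter.orbitsNonCrossing_and_cyclesIncreasing,
        fun h => dividesCoxeter_of_orbitsNonCrossing h.1 h.2⟩
end

section
/- The dual braid monoid of type I_2(m) (presented by σ_1,...,σ_m with all products σ_{i+1}σ_i and σ_1σ_m equal) has exactly m + 2 simple elements, i.e. the common value Δ of these products has exactly m + 2 left divisors in the monoid: 1, σ_1, ..., σ_m, and Δ. -/
/-!
The relations are homogeneous of degree `2`, so word length descends to the monoid and a left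
divisor of `Δ` has length `0`, `1` or `2`: it is `1`, a generator `σᵢ` (which divides
`Δ = σᵢ σᵢ₋₁`), or `Δ` itself. These `m + 2` elements are pairwise distinct because an action of
words on a three-state set that only remembers words of length at most `1` factors through the
monoid.
-/

/-- The defining relations of the dual braid monoid of type `I₂(m)`: all the cyclic products
`σ_{i+1} σ_i` (indices mod `m`) are equal. -/
def dualI2Rel (m : ℕ) [NeZero m] : FreeMonoid (Fin m) → FreeMonoid (Fin m) → Prop :=
  fun u v => ∃ i : Fin m, u = .of (i + 1) * .of i ∧ v = .of (i + 2) * .of (i + 1)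

namespace PresentedMonoid

variable {α : Type*} {rels : FreeMonoid α → FreeMonoid α → Prop}

theorem length_eq_of_mk_eq (hrels : ∀ u v, rels u v → u.length = v.length)
    {u v : FreeMonoid α} (h : mk rels u = mk rels v) : u.length = v.length := by
  have huv : ConGen.Rel rels u v := mk_eq_mk_iff.1 h
  clear h
  induction huv with
  | of _ _ h => exact hrels _ _ h
  | refl => rfl
  | symm _ ih => exact ih.symm
  | trans _ _ ih₁ ih₂ => exact ih₁.trans ih₂
  | mul _ _ ih₁ ih₂ => simp only [FreeMonoid.length_mul, ih₁, ih₂]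

end PresentedMonoid

theorem dualI2Rel_length_eq {m : ℕ} [NeZero m] (u v : FreeMonoid (Fin m))
    (h : dualI2Rel m u v) : u.length = v.length := by
  obtain ⟨i, rfl, rfl⟩ := h
  rfl

namespace DualI2

open Fin.NatCast

variable {m : ℕ} [NeZero m]

local notation "σ" => PresentedMonoid.of (dualI2Rel _)

variable (m) in
def Δ : PresentedMonoid (dualI2Rel m) := σ 1 * σ 0

theorem of_succ_mul_of (i : Fin m) : σ (i + 1) * σ i = Δ m := by
  obtain ⟨k, rfl⟩ : ∃ k : ℕ, (k : Fin m) = i := ⟨i, Fin.cast_val_eq_self i⟩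
  induction k with
  | zero => simp [Δ]
  | succ k ih =>
    rw [Nat.cast_succ, ← ih, add_assoc, one_add_one_eq_two]
    exact (PresentedMonoid.mk_eq_mk_of_rel ⟨(k : Fin m), rfl, rfl⟩).symm

/-- Acting on `none`, a word of length `0`, `1` (the letter `i`), or at least `2` yields `none`,
`some (some i)`, or `some none`. Both sides of every relation have length `2`, so this action
descends to the monoid and separates `1`, `Δ` and the generators. -/
def shortWordAction (i : Fin m) : Function.End (Option (Option (Fin m)))
  | none => some (some i)
  | some _ => some none

def shortWord : PresentedMonoid (dualI2Rel m) →* Function.End (Option (Option (Fin m))) :=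
  PresentedMonoid.lift shortWordAction <| by
    rintro _ _ ⟨i, rfl, rfl⟩
    funext x
    cases x <;> rfl

def simple : Option (Option (Fin m)) → PresentedMonoid (dualI2Rel m)
  | none => 1
  | some none => Δ m
  | some (some i) => σ i

theorem shortWord_simple_none (x : Option (Option (Fin m))) : shortWord (simple x) none = x := by
  rcases x with _ | _ | i <;> rfl

theorem simple_injective : Function.Injective (simple (m := m)) :=
  Function.LeftInverse.injective (g := fun s => shortWord s none) shortWord_simple_none

theorem exists_mul_eq_Δ_iff (s : PresentedMonoid (dualI2Rel m)) :
    (∃ t, s * t = Δ m) ↔ s ∈ Set.range simple := by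
  constructor
  · rintro ⟨t, hst⟩
    obtain ⟨u, rfl⟩ := PresentedMonoid.surjective_mk s
    obtain ⟨v, rfl⟩ := PresentedMonoid.surjective_mk t
    have hlen : u.length + v.length = 2 :=
      (FreeMonoid.length_mul u v).symm.trans
        (PresentedMonoid.length_eq_of_mk_eq dualI2Rel_length_eq hst)
    obtain hu | hu | hu : u.length = 0 ∨ u.length = 1 ∨ u.length = 2 := by omega
    · exact ⟨none, by rw [FreeMonoid.length_eq_zero.1 hu, map_one]; rfl⟩
    · obtain ⟨i, rfl⟩ := FreeMonoid.length_eq_one.1 hu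
      exact ⟨some (some i), rfl⟩
    · rw [FreeMonoid.length_eq_zero.1 (by omega : v.length = 0), map_one, mul_one] at hst
      exact ⟨some none, hst.symm⟩
  · rintro ⟨x, rfl⟩
    rcases x with _ | _ | i
    · exact ⟨Δ m, one_mul _⟩
    · exact ⟨1, mul_one _⟩
    · exact ⟨σ (i - 1), by rw [← of_succ_mul_of (i - 1), sub_add_cancel]; rfl⟩

end DualI2

theorem dualI2_card_simples_general (m : ℕ) [NeZero m] :
    Nat.card {s : PresentedMonoid (dualI2Rel m) //
      ∃ t, s * t = PresentedMonoid.of (dualI2Rel m) 1 * PresentedMonoid.of (dualI2Rel m) 0} =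
      m + 2 := by
  change Nat.card {s // ∃ t, s * t = DualI2.Δ m} = m + 2
  rw [Nat.card_congr (Equiv.subtypeEquivRight DualI2.exists_mul_eq_Δ_iff),
    Nat.card_range_of_injective DualI2.simple_injective, Nat.card_eq_fintype_card,
    Fintype.card_option, Fintype.card_option, Fintype.card_fin]

/-- The dual braid monoid `B*(I₂(m))` has exactly `m + 2` simple elements: the Garside
element `Δ = σ₂ σ₁` has exactly `m + 2` left divisors. -/
theorem dualI2_card_simples (m : ℕ) [NeZero m] (hm : 3 ≤ m) :
    Nat.card {s : PresentedMonoid (dualI2Rel m) //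
      ∃ t, s * t = PresentedMonoid.of (dualI2Rel m) 1 * PresentedMonoid.of (dualI2Rel m) 0} =
      m + 2 :=
  dualI2_card_simples_general m
end

section
/- In the braid group B(A_n) with standard Artin generators σ_1, ..., σ_n, the band generators a_{ts} = (σ_{t-1}···σ_{s+1}) σ_s (σ_{t-1}···σ_{s+1})⁻¹ for n+1 ≥ t > s ≥ 1 satisfy: a_{ts} a_{sr} = a_{sr} a_{tr} = a_{tr} a_{ts} for all t > s > r. -/
/-- The conjugating word `σ_{t-1} σ_{t-2} ⋯ σ_{s+1}`. -/
def bandWord {G : Type*} [Group G] (σ : ℕ → G) (t s : ℕ) : G :=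
  (((List.range' (s + 1) (t - 1 - s)).reverse).map σ).prod

/-- The band generator `a_{ts} = (σ_{t-1}⋯σ_{s+1}) σ_s (σ_{t-1}⋯σ_{s+1})⁻¹`. -/
def bandGen {G : Type*} [Group G] (σ : ℕ → G) (t s : ℕ) : G :=
  bandWord σ t s * σ s * (bandWord σ t s)⁻¹

/-!
Write `W = σ_{t-1} ⋯ σ_{s+1}`, `y = σ_s` and `b = a_{sr}`. Then `a_{ts} = W y W⁻¹` and
`a_{tr} = W (y b y⁻¹) W⁻¹`, while `W` commutes with `b` because their letters are at distance at
least two. Conjugating by `W`, the claim becomes `y b = b (y b y⁻¹) = (y b y⁻¹) y`, which is a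
rewriting of the braid relation `y b y = b y b`. That relation is proved by induction on `s`:
`a_{(s+1)r} = σ_s a_{sr} σ_s⁻¹`, and if `x c x = c x c` then `x c x⁻¹ = c⁻¹ x c`, so the braid
relation of `σ_{s+1}` with `a_{(s+1)r}` is the conjugate by `c = a_{sr}` of the braid relation of
`σ_{s+1}` with `σ_s`.
-/

section Braid

variable {G : Type*} [Group G]

def BraidRelation (x y : G) : Prop := x * y * x = y * x * y

theorem BraidRelation.symm {x y : G} (h : BraidRelation x y) : BraidRelation y x := Eq.symm h

theorem BraidRelation.map {F H : Type*} [Group H] [FunLike F G H] [MonoidHomClass F G H] (f : F)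
    {x y : G} (h : BraidRelation x y) : BraidRelation (f x) (f y) := by
  simpa only [BraidRelation, ← map_mul] using congrArg f h

theorem BraidRelation.mul_conj_inv_eq {x c : G} (h : BraidRelation x c) :
    x * c * x⁻¹ = c⁻¹ * x * c := by
  calc x * c * x⁻¹ = c⁻¹ * (c * x * c) * x⁻¹ := by group
    _ = c⁻¹ * x * c := by rw [← show x * c * x = c * x * c from h]; group

theorem BraidRelation.conj_of_commute {x y c : G} (hxc : BraidRelation x c)
    (hxy : BraidRelation x y) (hcy : Commute c y) : BraidRelation y (x * c * x⁻¹) := by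
  have hy : MulAut.conj c⁻¹ y = y := by
    rw [MulAut.conj_apply, inv_inv, mul_assoc, ← hcy.eq, inv_mul_cancel_left]
  have hx : MulAut.conj c⁻¹ x = x * c * x⁻¹ := by
    rw [MulAut.conj_apply, inv_inv, hxc.mul_conj_inv_eq]
  simpa only [hy, hx] using hxy.symm.map (MulAut.conj c⁻¹)

theorem BraidRelation.dual {y b : G} (h : BraidRelation y b) :
    y * b = b * (y * b * y⁻¹) ∧ b * (y * b * y⁻¹) = (y * b * y⁻¹) * y := by
  have hb : b * (y * b * y⁻¹) = y * b := by
    calc b * (y * b * y⁻¹) = (b * y * b) * y⁻¹ := by group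
      _ = y * b := by rw [← show y * b * y = b * y * b from h]; group
  exact ⟨hb.symm, by rw [hb]; group⟩

end Braid

section BandGenerators

variable {G : Type*} [Group G] (σ : ℕ → G)

theorem bandWord_succ_self (s : ℕ) : bandWord σ (s + 1) s = 1 := by
  simp [bandWord]

theorem bandWord_succ {m r : ℕ} (h : r < m) :
    bandWord σ (m + 1) r = σ m * bandWord σ m r := by
  unfold bandWord
  rw [show m + 1 - 1 - r = (m - 1 - r) + 1 by omega, List.range'_concat,
    show r + 1 + 1 * (m - 1 - r) = m by omega]
  simp

theorem bandGen_succ {m r : ℕ} (h : r < m) :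
    bandGen σ (m + 1) r = σ m * bandGen σ m r * (σ m)⁻¹ := by
  simp only [bandGen, bandWord_succ σ h]
  group

theorem bandWord_eq_mul {t s r : ℕ} (hsr : r < s) (hts : s < t) :
    bandWord σ t r = bandWord σ t s * σ s * bandWord σ s r := by
  induction t, hts using Nat.le_induction with
  | base => rw [bandWord_succ σ hsr, bandWord_succ_self, one_mul]
  | succ t hst ih =>
      rw [bandWord_succ σ (by omega), bandWord_succ σ hst, ih]
      group

theorem commute_bandWord {g : G} {t s : ℕ} (h : ∀ i, s < i → i < t → Commute g (σ i)) :
    Commute g (bandWord σ t s) := by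
  refine Commute.list_prod_right _ _ fun x hx => ?_
  obtain ⟨i, hi, rfl⟩ := List.mem_map.mp hx
  rw [List.mem_reverse, List.mem_range'_1] at hi
  exact h i (by omega) (by omega)

theorem commute_bandGen {g : G} {s r : ℕ} (hrs : r < s)
    (h : ∀ i, r ≤ i → i < s → Commute g (σ i)) : Commute g (bandGen σ s r) := by
  have hW : Commute g (bandWord σ s r) := commute_bandWord σ fun i hri his => h i hri.le his
  exact (hW.mul_right (h r le_rfl hrs)).mul_right hW.inv_right

theorem braidRelation_bandGen {n : ℕ}
    (hbraid : ∀ i, 1 ≤ i → i + 1 ≤ n → σ i * σ (i + 1) * σ i = σ (i + 1) * σ i * σ (i + 1))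
    (hcomm : ∀ i j, 1 ≤ i → i + 2 ≤ j → j ≤ n → σ i * σ j = σ j * σ i)
    {s r : ℕ} (hr : 1 ≤ r) (hrs : r < s) (hs : s ≤ n) :
    BraidRelation (σ s) (bandGen σ s r) := by
  induction s, hrs using Nat.le_induction with
  | base =>
      rw [bandGen, bandWord_succ_self, one_mul, inv_one, mul_one]
      exact (hbraid r hr hs).symm
  | succ s hrs ih =>
      rw [bandGen_succ σ hrs]
      refine (ih (by omega)).conj_of_commute (hbraid s (by omega) hs) ?_
      refine (commute_bandGen σ hrs fun i hri his => ?_).symm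
      exact (hcomm i (s + 1) (by omega) (by omega) hs : Commute (σ i) _).symm

end BandGenerators

/-- In the braid group `B(A_n)` (realized in any group by elements `σ_1, …, σ_n` satisfying
the Artin relations), the band generators satisfy
`a_{ts} a_{sr} = a_{sr} a_{tr} = a_{tr} a_{ts}` for all `t > s > r`. -/
theorem band_generators_dual_relations {G : Type*} [Group G] (n : ℕ) (σ : ℕ → G)
    (hbraid : ∀ i, 1 ≤ i → i + 1 ≤ n → σ i * σ (i + 1) * σ i = σ (i + 1) * σ i * σ (i + 1))
    (hcomm : ∀ i j, 1 ≤ i → i + 2 ≤ j → j ≤ n → σ i * σ j = σ j * σ i)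
    (t s r : ℕ) (ht : t ≤ n + 1) (hts : s < t) (hsr : r < s) (hr : 1 ≤ r) :
    bandGen σ t s * bandGen σ s r = bandGen σ s r * bandGen σ t r ∧
    bandGen σ s r * bandGen σ t r = bandGen σ t r * bandGen σ t s := by
  set W := bandWord σ t s
  set b := bandGen σ s r
  have hbraid_sb : BraidRelation (σ s) b := braidRelation_bandGen σ hbraid hcomm hr hsr (by omega)
  have hWb : Commute W b := commute_bandGen σ hsr fun i hri his =>
    (commute_bandWord σ fun j hsj hjt => hcomm i j (by omega) (by omega) (by omega)).symm
  have hb : MulAut.conj W b = b := by rw [MulAut.conj_apply, hWb.eq, mul_inv_cancel_right]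
  have hts_eq : bandGen σ t s = MulAut.conj W (σ s) := rfl
  have htr_eq : bandGen σ t r = MulAut.conj W (σ s * b * (σ s)⁻¹) := by
    simp only [MulAut.conj_apply, bandGen, bandWord_eq_mul σ hsr hts, b, W]
    group
  rw [hts_eq, htr_eq]
  simpa only [map_mul, hb] using
    hbraid_sb.dual.imp (congrArg (MulAut.conj W)) (congrArg (MulAut.conj W))
end
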